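/- arXiv:1904.03271 — 5 statements merged into one kernel-verified Lean document; each statement's English description precedes it below -/
import Mathlib

section
/- The rank over the binary field F_2 of the incidence matrix A* of the complete k-uniform hypergraph on n vertices (rows indexed by k-subsets e of [n], columns indexed by (k-1)-subsets t of [n], with entry A*_{e,t} = 1 if t ⊆ e and 0 otherwise) equals binom(n-1, k-1), for 2 ≤ k ≤ n. -/
/-!
Fix a vertex `z`. The rows of the inclusion matrix are the unsigned boundaries `∂e` of the
`k`-sets `e`. Those with `z ∈ e` are linearly independent, since the row of `insert z t`
(`z ∉ t`) restricted to the columns avoiding `z` is the indicator of `t`. They also span: for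
`z ∉ e`, the identity `∂(∂(insert z e)) = 0`, valid in characteristic two, writes `∂e` as the sum
of the `∂(insert z (e.erase x))`, `x ∈ e`. Hence the rank is the number of `(k-1)`-subsets of
the remaining `n - 1` vertices.
-/

open Finset Submodule

namespace Finset

variable {α : Type*} [DecidableEq α]

theorem notMem_of_mem_powersetCard_erase {s t : Finset α} {z : α} {j : ℕ}
    (ht : t ∈ powersetCard j (s.erase z)) : z ∉ t :=
  fun hz => notMem_erase z s ((mem_powersetCard.1 ht).1 hz)

theorem filter_subset_erase_eq_sdiff {s t : Finset α} (h : t ⊆ s) :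
    {x ∈ s | t ⊆ s.erase x} = s \ t := by
  ext x
  simp only [mem_filter, mem_sdiff, subset_erase, h, true_and]

/-- `∂ ∘ ∂ = 0` for the unsigned simplicial boundary: `t` lies in none or exactly two of the
facets `s.erase x` of `s`. -/
theorem sum_ite_subset_erase_eq_zero {F : Type*} [Ring F] [CharP F 2] {s t : Finset α}
    (h : #t + 2 = #s) : ∑ x ∈ s, (if t ⊆ s.erase x then (1 : F) else 0) = 0 := by
  rw [sum_boole]
  by_cases hts : t ⊆ s
  · rw [filter_subset_erase_eq_sdiff hts, card_sdiff_of_subset hts, ← h, Nat.add_sub_cancel_left]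
    exact_mod_cast CharTwo.two_eq_zero
  · rw [filter_false_of_mem fun x _ hx => hts (hx.trans (erase_subset x s)), card_empty,
      Nat.cast_zero]

end Finset

section InclusionMatrix

variable {F α : Type*} [DecidableEq α]

variable (F) in
def inclusionRow [Zero F] [One F] (j : ℕ) (s : Finset α) : {t : Finset α // #t = j} → F :=
  fun t => if t.1 ⊆ s then 1 else 0

variable (F α) in
def inclusionMatrix [Zero F] [One F] (k : ℕ) :
    Matrix {s : Finset α // #s = k} {s : Finset α // #s = k - 1} F :=
  Matrix.of fun e => inclusionRow F (k - 1) e.1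

theorem inclusionRow_insert_apply [Zero F] [One F] {j : ℕ} {z : α} {s : Finset α} (hs : #s = j)
    (t : {t : Finset α // #t = j}) (hz : z ∉ t.1) :
    inclusionRow F j (insert z s) t = if t.1 = s then 1 else 0 := by
  refine if_congr ?_ rfl rfl
  rw [subset_insert_iff_of_notMem hz]
  exact ⟨fun h => eq_of_subset_of_card_le h (by rw [hs, t.2]), fun h => h.le⟩

theorem linearIndependent_inclusionRow_insert [Field F] [Fintype α] (z : α) (j : ℕ) :
    LinearIndependent F
      fun t : powersetCard j (univ.erase z) => inclusionRow F j (insert z t.1) := by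
  let link : powersetCard j (univ.erase z) → {t : Finset α // #t = j} :=
    fun t => ⟨t.1, (mem_powersetCard.1 t.2).2⟩
  refine LinearIndependent.of_comp (LinearMap.funLeft F F link) ?_
  convert (Pi.basisFun F (powersetCard j (univ.erase z))).linearIndependent using 1
  funext t t'
  rw [Function.comp_apply, LinearMap.funLeft_apply, Pi.basisFun_apply, Pi.single_apply,
    inclusionRow_insert_apply (mem_powersetCard.1 t.2).2 _
      (notMem_of_mem_powersetCard_erase t'.2)]
  exact if_congr (show t'.1 = t.1 ↔ t' = t from Subtype.ext_iff.symm) rfl rfl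

variable [Field F] [CharP F 2]

theorem inclusionRow_eq_sum_inclusionRow_insert_erase {j : ℕ} {z : α} {e : Finset α}
    (hz : z ∉ e) (he : j + 1 = #e) :
    inclusionRow F j e = ∑ x ∈ e, inclusionRow F j (insert z (e.erase x)) := by
  funext t
  have hcard : #t.1 + 2 = #(insert z e) := by rw [card_insert_of_notMem hz, t.2, ← he]
  have hbd := sum_ite_subset_erase_eq_zero (F := F) hcard
  rw [sum_insert hz, erase_insert hz, CharTwo.add_eq_zero] at hbd
  rw [Finset.sum_apply, inclusionRow, hbd]
  refine sum_congr rfl fun x hx => ?_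
  rw [erase_insert_of_ne (ne_of_mem_of_not_mem hx hz).symm, inclusionRow]

variable [Fintype α]

theorem inclusionRow_mem_span_inclusionRow_insert (z : α) {k : ℕ} (hk : k ≠ 0)
    (e : {s : Finset α // #s = k}) :
    inclusionRow F (k - 1) e.1 ∈ span F (Set.range fun t : powersetCard (k - 1) (univ.erase z) =>
      inclusionRow F (k - 1) (insert z t.1)) := by
  by_cases hz : z ∈ e.1
  · refine subset_span ⟨⟨e.1.erase z, ?_⟩, congrArg (inclusionRow F (k - 1)) (insert_erase hz)⟩
    rw [mem_powersetCard, card_erase_of_mem hz, e.2]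
    exact ⟨erase_subset_erase z (subset_univ _), rfl⟩
  · rw [inclusionRow_eq_sum_inclusionRow_insert_erase hz (by rw [e.2]; omega)]
    refine sum_mem fun x hx => subset_span ⟨⟨e.1.erase x, ?_⟩, rfl⟩
    rw [mem_powersetCard, card_erase_of_mem hx, e.2]
    exact ⟨fun y hy => mem_erase.2 ⟨fun h => hz (h ▸ mem_of_mem_erase hy), mem_univ y⟩, rfl⟩

theorem rank_inclusionMatrix (z : α) {k : ℕ} (hk : k ≠ 0) :
    (inclusionMatrix F α k).rank = (Fintype.card α - 1).choose (k - 1) := by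
  have hspan : span F (Set.range (inclusionMatrix F α k).row) = span F (Set.range
      fun t : powersetCard (k - 1) (univ.erase z) => inclusionRow F (k - 1) (insert z t.1)) := by
    refine le_antisymm (span_le.2 (Set.range_subset_iff.2
      (inclusionRow_mem_span_inclusionRow_insert z hk))) (span_le.2 (Set.range_subset_iff.2 ?_))
    intro t
    have hcard : #(insert z t.1) = k := by
      rw [card_insert_of_notMem (notMem_of_mem_powersetCard_erase t.2),
        (mem_powersetCard.1 t.2).2]
      omega
    exact subset_span ⟨⟨insert z t.1, hcard⟩, rfl⟩
  rw [Matrix.rank_eq_finrank_span_row, hspan,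
    finrank_span_eq_card (linearIndependent_inclusionRow_insert z (k - 1)), Fintype.card_coe,
    card_powersetCard, card_erase_of_mem (mem_univ z), card_univ]

end InclusionMatrix

theorem stmt_0 (n k : ℕ) (h2 : 2 ≤ k) (hkn : k ≤ n) :
    Matrix.rank (Matrix.of (fun (e : {s : Finset (Fin n) // s.card = k})
        (t : {s : Finset (Fin n) // s.card = k - 1}) =>
        if t.1 ⊆ e.1 then (1 : ZMod 2) else 0)) = (n - 1).choose (k - 1) := by
  exact (rank_inclusionMatrix (F := ZMod 2) (⟨0, by omega⟩ : Fin n) (k := k) (by omega)).trans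
    (by rw [Fintype.card_fin])
end

section
/- For any k-subset e of [n] with 1 ∉ e, the row r_e of the complete incidence matrix A* is equal (over F_2) to the sum of the k rows r_{e_i}, where e_i = (e ∪ {1}) \ {i-th element of e} for i = 1,...,k. -/
/-!
Since `t ⊆ (e ∪ {1}) \ {i}` holds iff `t ⊆ e ∪ {1}` and `i ∉ t`, the right-hand side counts
`e \ t` when `t ⊆ e ∪ {1}` and vanishes otherwise. If `t ⊆ e`, then `e \ t` is a single point;
if `t` contains `1`, then `t \ {1} ⊆ e` has `k - 2` elements and `e \ t` has two, which is
`0` in `F_2`, as is the left-hand side.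
-/

open Finset

namespace Finset

variable {α : Type*} [DecidableEq α]

theorem sum_boole_subset_erase {R : Type*} [AddCommMonoidWithOne R] (e s t : Finset α) :
    ∑ i ∈ e, (if t ⊆ s.erase i then (1 : R) else 0) = if t ⊆ s then (#(e \ t) : R) else 0 := by
  simp_rw [subset_erase, sum_boole]
  split_ifs with hts
  · simp only [hts, true_and, sdiff_eq_filter]
  · simp [hts]

theorem card_sdiff_add_card_eq_succ_of_subset_insert {a : α} {e t : Finset α} (ha : a ∉ e)
    (hta : t ⊆ insert a e) (hte : ¬t ⊆ e) : #(e \ t) + #t = #e + 1 := by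
  have hat : a ∈ t := by
    by_contra hat
    exact hte (by rwa [subset_insert_iff, erase_eq_of_notMem hat] at hta)
  have hinter : e ∩ t = t.erase a := by
    ext x
    constructor
    · intro hx
      exact mem_erase.2 ⟨ne_of_mem_of_not_mem (mem_inter.1 hx).1 ha, (mem_inter.1 hx).2⟩
    · intro hx
      exact mem_inter.2 ⟨subset_insert_iff.1 hta hx, mem_of_mem_erase hx⟩
  have hcard := card_sdiff_add_card_inter e t
  rw [hinter, card_erase_of_mem hat] at hcard
  have : 0 < #t := card_pos.2 ⟨a, hat⟩
  omega

theorem boole_subset_eq_sum_boole_subset_erase_insert {a : α} {e t : Finset α} (ha : a ∉ e)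
    (ht : #t + 1 = #e) :
    (if t ⊆ e then (1 : ZMod 2) else 0) =
      ∑ i ∈ e, (if t ⊆ (insert a e).erase i then (1 : ZMod 2) else 0) := by
  rw [sum_boole_subset_erase]
  by_cases hte : t ⊆ e
  · have : #(e \ t) = 1 := by rw [card_sdiff_of_subset hte]; omega
    simp [hte, hte.trans (subset_insert a e), this]
  by_cases hta : t ⊆ insert a e
  · have : #(e \ t) = 2 := by
      have := card_sdiff_add_card_eq_succ_of_subset_insert ha hta hte
      omega
    simp only [hte, hta, this, if_true, if_false]
    decide
  · simp [hte, hta]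

end Finset

theorem stmt_2_general (n k : ℕ) (h2 : 2 ≤ k) (v₀ : Fin n)
    (e : Finset (Fin n)) (he : e.card = k) (h1 : v₀ ∉ e) :
    ∀ t : Finset (Fin n), t.card = k - 1 →
      (if t ⊆ e then (1 : ZMod 2) else 0) =
        ∑ i ∈ e, (if t ⊆ (insert v₀ e).erase i then (1 : ZMod 2) else 0) := by
  intro t ht
  exact boole_subset_eq_sum_boole_subset_erase_insert h1 (by omega)

theorem stmt_2 (n k : ℕ) (h2 : 2 ≤ k) (hkn : k ≤ n) (v₀ : Fin n) (hv₀ : v₀.val = 0)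
    (e : Finset (Fin n)) (he : e.card = k) (h1 : v₀ ∉ e) :
    ∀ t : Finset (Fin n), t.card = k - 1 →
      (if t ⊆ e then (1 : ZMod 2) else 0) =
        ∑ i ∈ e, (if t ⊆ (insert v₀ e).erase i then (1 : ZMod 2) else 0) :=
  stmt_2_general n k h2 v₀ e he h1
end

section
/- Let G = (V,E) be a path-connected, cycle-free hypergraph with all hyperedges nonempty. Then the sum over all vertices v ∈ V of (deg(v) - 1) equals |E| - 1, where deg(v) is the number of hyperedges containing v. -/
/-- A simple path from `u` to `w` in the hypergraph with hyperedge set `E`: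
distinct vertices `v 0 = u, …, v k = w` and distinct hyperedges `A 1, …, A k`
with consecutive vertices belonging to the corresponding hyperedge. -/
def IsSimplePath {V : Type*} (E : Finset (Finset V)) (u w : V) : Prop :=
  ∃ (k : ℕ) (v : Fin (k + 1) → V) (A : Fin k → Finset V),
    Function.Injective v ∧ Function.Injective A ∧ (∀ i, A i ∈ E) ∧
    v 0 = u ∧ v (Fin.last k) = w ∧
    ∀ i : Fin k, v i.castSucc ∈ A i ∧ v i.succ ∈ A i

/-- The hypergraph is path-connected: every pair of vertices is joined by a simple path. -/
def PathConn (V : Type*) (E : Finset (Finset V)) : Prop :=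
  ∀ u w : V, IsSimplePath E u w

/-- A simple cycle: distinct vertices `v 0, …, v (k-1)` and distinct hyperedges
`A 0, …, A (k-1)` with `v i, v (i+1 mod k) ∈ A i`. -/
def HasSimpleCycle {V : Type*} (E : Finset (Finset V)) : Prop :=
  ∃ k : ℕ, ∃ hk : 2 ≤ k, ∃ (v : Fin k → V) (A : Fin k → Finset V),
    Function.Injective v ∧ Function.Injective A ∧ (∀ i, A i ∈ E) ∧
    ∀ i : Fin k, v i ∈ A i ∧ v ⟨(i.val + 1) % k, Nat.mod_lt _ (by omega)⟩ ∈ A i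


/-!
The incidence graph of the hypergraph, with a node for every vertex and every hyperedge and an
edge `v — A` whenever `v ∈ A`, is a tree: simple paths of the hypergraph become walks in it, and
a cycle in it alternates between vertices and hyperedges, so it is a simple cycle of the
hypergraph. Its edges are the incidences, of which there are `∑ v, deg v`, so the edge count of
a tree gives `∑ v, deg v + 1 = |V| + |E|`; and every vertex has positive degree.
-/

open SimpleGraph Finset

namespace SimpleGraph

variable {α : Type*} {G : SimpleGraph α} {u : α}

lemma Walk.getVert_mod_length (p : G.Walk u u) {i : ℕ} (hi : i ≤ p.length) :
    p.getVert (i % p.length) = p.getVert i := by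
  rcases hi.lt_or_eq with hi | rfl
  · rw [Nat.mod_eq_of_lt hi]
  · rw [Nat.mod_self, Walk.getVert_zero, Walk.getVert_length]

lemma Coloring.even_iff_congr_getVert (c : G.Coloring Bool) {v : α} (p : G.Walk u v) {i : ℕ}
    (hi : i ≤ p.length) : Even i ↔ (c u ↔ c (p.getVert i)) := by
  simpa [Walk.take_length, min_eq_left hi] using c.even_length_iff_congr (p.take i)

end SimpleGraph

section IncidenceGraph

variable {V : Type*}

def incidenceGraph (E : Finset (Finset V)) : SimpleGraph (V ⊕ E) where
  Adj
    | .inl v, .inr A => v ∈ A.1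
    | .inr A, .inl v => v ∈ A.1
    | _, _ => False
  symm := ⟨by rintro (v | A) (w | B) h <;> exact h⟩
  loopless := ⟨by rintro (v | A) h <;> exact h⟩

namespace incidenceGraph

variable {E : Finset (Finset V)}

@[simp] lemma adj_inl_inr {v : V} {A : E} : (incidenceGraph E).Adj (.inl v) (.inr A) ↔ v ∈ A.1 :=
  Iff.rfl

@[simp] lemma adj_inr_inl {v : V} {A : E} : (incidenceGraph E).Adj (.inr A) (.inl v) ↔ v ∈ A.1 :=
  Iff.rfl

@[simp] lemma not_adj_inl_inl {v w : V} : ¬(incidenceGraph E).Adj (.inl v) (.inl w) := id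

@[simp] lemma not_adj_inr_inr {A B : E} : ¬(incidenceGraph E).Adj (.inr A) (.inr B) := id

instance [DecidableEq V] : DecidableRel (incidenceGraph E).Adj
  | .inl v, .inr A => inferInstanceAs (Decidable (v ∈ A.1))
  | .inr A, .inl v => inferInstanceAs (Decidable (v ∈ A.1))
  | .inl _, .inl _ => .isFalse id
  | .inr _, .inr _ => .isFalse id

def isLeftColoring : (incidenceGraph E).Coloring Bool :=
  Coloring.mk Sum.isLeft (by rintro (v | A) (w | B) h <;> simp_all)

lemma isBipartiteWith :
    (incidenceGraph E).IsBipartiteWith (Set.range Sum.inl) (Set.range Sum.inr) where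
  disjoint := Set.isCompl_range_inl_range_inr.disjoint
  mem_of_adj := by rintro (v | A) (w | B) h <;> simp_all

lemma degree_inl [Fintype V] [DecidableEq V] (v : V) :
    (incidenceGraph E).degree (.inl v) = #{A ∈ E | v ∈ A} := by
  rw [degree, neighborFinset_eq_filter, card_filter, Fintype.sum_sum_type]
  simp [filter_attach (fun A => v ∈ A)]

lemma card_edgeFinset [Fintype V] [DecidableEq V] :
    #(incidenceGraph E).edgeFinset = ∑ v, #{A ∈ E | v ∈ A} := by
  rw [← isBipartiteWith_sum_degrees_eq_card_edges (s := univ.map .inl) (t := univ.map .inr)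
    (by simpa using isBipartiteWith), sum_map]
  exact sum_congr rfl fun v _ => degree_inl v

lemma reachable_of_isSimplePath {u w : V} (h : IsSimplePath E u w) :
    (incidenceGraph E).Reachable (.inl u) (.inl w) := by
  obtain ⟨k, v, A, -, -, hA, rfl, rfl, hmem⟩ := h
  induction Fin.last k using Fin.induction with
  | zero => rfl
  | succ i ih =>
    have hin : (incidenceGraph E).Adj (.inl (v i.castSucc)) (.inr ⟨A i, hA i⟩) := (hmem i).1
    have hout : (incidenceGraph E).Adj (.inr ⟨A i, hA i⟩) (.inl (v i.succ)) := (hmem i).2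
    exact ih.trans (hin.reachable.trans hout.reachable)

lemma connected (hne : ∀ A ∈ E, A.Nonempty) (hconn : PathConn V E) (hE : E.Nonempty) :
    (incidenceGraph E).Connected := by
  have reachable_from_inl : ∀ x, ∃ v, (incidenceGraph E).Reachable (.inl v) x := by
    rintro (v | ⟨A, hA⟩)
    · exact ⟨v, .rfl⟩
    · obtain ⟨v, hv⟩ := hne A hA
      exact ⟨v, Adj.reachable (G := incidenceGraph E) hv⟩
  obtain ⟨A, hA⟩ := hE
  refine (connected_iff _).2 ⟨fun x y => ?_, ⟨.inr ⟨A, hA⟩⟩⟩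
  obtain ⟨v, hv⟩ := reachable_from_inl x
  obtain ⟨w, hw⟩ := reachable_from_inl y
  exact hv.symm.trans ((reachable_of_isSimplePath (hconn v w)).trans hw)

lemma isLeft_getVert_iff {x y : V ⊕ E} (p : (incidenceGraph E).Walk x y) {i : ℕ}
    (hi : i ≤ p.length) : (p.getVert i).isLeft = x.isLeft ↔ Even i := by
  rw [isLeftColoring.even_iff_congr_getVert p hi]
  change _ ↔ (x.isLeft ↔ (p.getVert i).isLeft)
  rw [Bool.coe_iff_coe, eq_comm]

lemma hasSimpleCycle_of_isCycle {x : V ⊕ E} (hx : x.isLeft) {c : (incidenceGraph E).Walk x x}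
    (hc : c.IsCycle) : HasSimpleCycle E := by
  have hn := hc.three_le_length
  obtain ⟨k, hk⟩ : Even c.length := by
    simpa using (isLeft_getVert_iff c le_rfl).1
  -- the cycle visits the vertex `v i` at step `2 i` and the hyperedge `A i` at step `2 i + 1`
  have hl : ∀ i : Fin k, ∃ v, c.getVert (2 * i) = .inl v := fun i =>
    Sum.isLeft_iff.1 (by rw [isLeft_getVert_iff c (by omega) |>.2 (even_two_mul _), hx])
  have hr : ∀ i : Fin k, ∃ A, c.getVert (2 * i + 1) = .inr A := fun i => by
    refine Sum.isRight_iff.1 (Sum.not_isLeft.1 fun h => Nat.not_even_two_mul_add_one i ?_)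
    exact (isLeft_getVert_iff c (by omega)).1 (by rw [h, hx])
  choose v hv using hl
  choose A hA using hr
  have hinj : Set.InjOn c.getVert {i | i ≤ c.length - 1} := hc.getVert_injOn'
  refine ⟨k, by omega, v, fun i => (A i).1, fun i j hij => ?_, fun i j hij => ?_,
    fun i => (A i).2, fun i => ⟨?_, ?_⟩⟩
  · have := @hinj (2 * i) (by simp; omega) (2 * j) (by simp; omega) (by rw [hv, hv, hij])
    omega
  · have := @hinj (2 * i + 1) (by simp; omega) (2 * j + 1) (by simp; omega)
      (by rw [hA, hA, Subtype.ext hij])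
    omega
  · have := c.adj_getVert_succ (i := 2 * i) (by omega)
    rwa [hv, hA] at this
  · have := c.adj_getVert_succ (i := 2 * i + 1) (by omega)
    rwa [hA, ← c.getVert_mod_length (by omega), show 2 * (i : ℕ) + 1 + 1 = 2 * (i + 1) by ring,
      hk, ← two_mul, Nat.mul_mod_mul_left, hv ⟨(i + 1) % k, Nat.mod_lt _ (by omega)⟩] at this

lemma isAcyclic (hcf : ¬HasSimpleCycle E) : (incidenceGraph E).IsAcyclic := by
  classical
  intro x c hc
  by_cases hx : x.isLeft
  · exact hcf (hasSimpleCycle_of_isCycle hx hc)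
  · have hsnd : c.snd.isLeft := by
      have := hc.three_le_length
      simpa [hx] using (isLeft_getVert_iff c (i := 1) (by omega)).not
    exact hcf (hasSimpleCycle_of_isCycle hsnd (hc.rotate (c.getVert_mem_support 1)))

end incidenceGraph

end IncidenceGraph

theorem stmt_5 {V : Type*} [Fintype V] [DecidableEq V] (E : Finset (Finset V))
    (hne : ∀ A ∈ E, A.Nonempty) (hconn : PathConn V E) (hcf : ¬HasSimpleCycle E) :
    ∑ v : V, ((E.filter (fun A => v ∈ A)).card - 1) = E.card - 1 := by
  -- for `E = ∅` both sides are `0` by truncated subtraction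
  rcases E.eq_empty_or_nonempty with rfl | hE
  · simp
  have hconn' := incidenceGraph.connected hne hconn hE
  have hcard := (IsTree.mk hconn' (incidenceGraph.isAcyclic hcf)).card_edgeFinset
  rw [incidenceGraph.card_edgeFinset, Fintype.card_sum, Fintype.card_coe] at hcard
  have hdeg_pos : ∀ v, 1 ≤ #{A ∈ E | v ∈ A} := fun v => by
    obtain ⟨A, hA⟩ := hE
    have : Nontrivial (V ⊕ E) := ⟨⟨.inl v, .inr ⟨A, hA⟩, Sum.inl_ne_inr⟩⟩
    simpa [incidenceGraph.degree_inl] using hconn'.preconnected.degree_pos_of_nontrivial (.inl v)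
  rw [sum_tsub_distrib _ fun v _ => hdeg_pos v, sum_const, card_univ, smul_eq_mul, mul_one]
  omega
end

section
/- Every path-connected, cycle-free hypergraph with at least two hyperedges contains a leaf hyperedge, i.e., a hyperedge A ∈ E such that A intersects the union of all other hyperedges in exactly one vertex. -/
open Finset Function

theorem Set.InjOn.update {α β : Type*} [DecidableEq α] {f : α → β} {s : Set α} {a : α} {b : β}
    (hf : Set.InjOn f s) (ha : a ∉ s) (hb : b ∉ f '' s) :
    Set.InjOn (Function.update f a b) (insert a s) := by
  have heq : Set.EqOn f (Function.update f a b) s := fun i hi =>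
    (update_of_ne (ne_of_mem_of_not_mem hi ha) _ _).symm
  rw [Set.injOn_insert ha, update_self, ← heq.image_eq]
  exact ⟨hf.congr heq, hb⟩

theorem Fin.exists_castSucc_and_not_succ {k : ℕ} {p : Fin (k + 1) → Prop} (h0 : p 0)
    (hlast : ¬p (Fin.last k)) : ∃ i : Fin k, p i.castSucc ∧ ¬p i.succ := by
  by_contra! h
  exact hlast (Fin.induction h0 h (Fin.last k))

section Hypergraph

variable {V : Type*} {E : Finset (Finset V)}

theorem IsSimplePath.exists_inter_nonempty [DecidableEq V] {A : Finset V} {a b : V}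
    (h : IsSimplePath E a b) (ha : a ∈ A) (hb : b ∉ A) : ∃ D ∈ E, D ≠ A ∧ (A ∩ D).Nonempty := by
  obtain ⟨k, v, D, -, -, hDE, rfl, rfl, hstep⟩ := h
  obtain ⟨i, hin, hout⟩ := Fin.exists_castSucc_and_not_succ (p := (v · ∈ A)) ha hb
  refine ⟨D i, hDE i, ?_, v i.castSucc, mem_inter.mpr ⟨hin, (hstep i).1⟩⟩
  rintro rfl
  exact hout (hstep i).2

theorem inter_sup_erase_nonempty [DecidableEq V] (hne : ∀ A ∈ E, A.Nonempty)
    (hconn : PathConn V E) (hE : 2 ≤ E.card) {A : Finset V} (hA : A ∈ E) :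
    (A ∩ (E.erase A).sup id).Nonempty := by
  suffices ∃ D ∈ E, D ≠ A ∧ (A ∩ D).Nonempty by
    obtain ⟨D, hDE, hDA, c, hc⟩ := this
    rw [mem_inter] at hc
    exact ⟨c, mem_inter.mpr ⟨hc.1, mem_sup.mpr ⟨D, mem_erase.mpr ⟨hDA, hDE⟩, hc.2⟩⟩⟩
  obtain ⟨B, hBE, hBA⟩ := exists_mem_ne (by omega : 1 < E.card) A
  obtain ⟨b, hb⟩ := hne B hBE
  by_cases hbA : b ∈ A
  · exact ⟨B, hBE, hBA, b, mem_inter.mpr ⟨hbA, hb⟩⟩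
  · obtain ⟨a, ha⟩ := hne A hA
    exact (hconn a b).exists_inter_nonempty ha hbA

/-- The alternating sequence `A 0, x 0, A 1, …, x (n - 1), A n` with `x i ∈ A i ∩ A (i + 1)`;
the values of `A` and `x` outside these index ranges play no role. -/
structure IsEdgeWalk (E : Finset (Finset V)) (n : ℕ) (A : ℕ → Finset V) (x : ℕ → V) : Prop where
  mem : ∀ i ≤ n, A i ∈ E
  mem_left : ∀ i < n, x i ∈ A i
  mem_right : ∀ i < n, x i ∈ A (i + 1)

structure IsEdgePath (E : Finset (Finset V)) (n : ℕ) (A : ℕ → Finset V) (x : ℕ → V) : Prop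
    extends IsEdgeWalk E n A x where
  injOn_edge : Set.InjOn A (Set.Iic n)
  injOn_vertex : Set.InjOn x (Set.Iio n)

variable {n : ℕ} {A : ℕ → Finset V} {x : ℕ → V}

theorem IsEdgeWalk.snoc (hw : IsEdgeWalk E n A x) {B : Finset V} {y : V} (hB : B ∈ E)
    (hyA : y ∈ A n) (hyB : y ∈ B) :
    IsEdgeWalk E (n + 1) (update A (n + 1) B) (update x n y) where
  mem i hi := by
    rcases (show i ≤ n ∨ i = n + 1 by omega) with hi | rfl
    · rw [update_of_ne (by omega)]; exact hw.mem i hi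
    · rwa [update_self]
  mem_left i hi := by
    rcases (show i < n ∨ i = n by omega) with hi | rfl
    · rw [update_of_ne (by omega), update_of_ne (by omega)]; exact hw.mem_left i hi
    · rwa [update_self, update_of_ne (by omega)]
  mem_right i hi := by
    rcases (show i < n ∨ i = n by omega) with hi | rfl
    · rw [update_of_ne (by omega), update_of_ne (by omega)]; exact hw.mem_right i hi
    · rwa [update_self, update_self]

theorem IsEdgeWalk.hasSimpleCycle {m j : ℕ} (hw : IsEdgeWalk E m A x) (hjm : j + 2 ≤ m)
    (hx : Set.InjOn x (Set.Ico j m)) (hA : Set.InjOn A (Set.Ioc j m)) (hclose : x j ∈ A m) :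
    HasSimpleCycle E := by
  refine ⟨m - j, by omega, fun t => x (j + t), fun t => A (j + 1 + t), ?_, ?_, ?_, ?_⟩
  · intro s t hst
    have := hx (by simp; omega) (by simp; omega) hst
    ext; omega
  · intro s t hst
    have := hA (by simp; omega) (by simp; omega) hst
    ext; omega
  · intro t; exact hw.mem _ (by omega)
  · intro t
    refine ⟨by simpa [add_right_comm] using hw.mem_right (j + t) (by omega), ?_⟩
    by_cases ht : t.val + 1 < m - j
    · simpa [Nat.mod_eq_of_lt ht, add_right_comm, add_assoc] using
        hw.mem_left (j + (t + 1)) (by omega)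
    · change x (j + (t.val + 1) % (m - j)) ∈ A (j + 1 + t)
      rw [show t.val + 1 = m - j by omega, Nat.mod_self, add_zero]
      convert hclose using 2
      omega

theorem IsEdgePath.card_lt (hp : IsEdgePath E n A x) : n < E.card := by
  have := card_le_card_of_injOn A (s := range (n + 1))
    (fun i hi => hp.mem i (by simp at hi; omega))
    (hp.injOn_edge.mono fun i hi => by simp at hi ⊢; omega)
  simpa using this

theorem IsEdgePath.notMem_image_vertex (hcf : ¬HasSimpleCycle E) (hp : IsEdgePath E n A x)
    {y : V} (hyA : y ∈ A n) (hy : y ≠ x (n - 1)) : y ∉ x '' Set.Iio n := by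
  rintro ⟨i, hi, rfl⟩
  have hin : i + 2 ≤ n := by
    have : i ≠ n - 1 := fun h => hy (h ▸ rfl)
    simp only [Set.mem_Iio] at hi
    omega
  exact hcf <| hp.hasSimpleCycle hin (hp.injOn_vertex.mono fun k hk => by simp at hk ⊢; omega)
    (hp.injOn_edge.mono fun k hk => by simp at hk ⊢; omega) hyA

/-- A repeated vertex or hyperedge would close a cycle. -/
theorem IsEdgePath.snoc (hcf : ¬HasSimpleCycle E) (hp : IsEdgePath E n A x) {B : Finset V}
    {y : V} (hB : B ∈ E) (hBA : B ≠ A n) (hyA : y ∈ A n) (hyB : y ∈ B) (hy : y ≠ x (n - 1)) :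
    IsEdgePath E (n + 1) (update A (n + 1) B) (update x n y) := by
  have hx : Set.InjOn (update x n y) (Set.Iio (n + 1)) :=
    (hp.injOn_vertex.update (by simp) (hp.notMem_image_vertex hcf hyA hy)).mono
      fun i hi => by simp at hi ⊢; omega
  have hw := hp.toIsEdgeWalk.snoc hB hyA hyB
  refine ⟨hw, (hp.injOn_edge.update (by simp) ?_).mono fun i hi => by simp at hi ⊢; omega, hx⟩
  rintro ⟨j, hj, rfl⟩
  have hjn : j < n := lt_of_le_of_ne hj fun h => hBA (h ▸ rfl)
  have hA : Set.InjOn (update A (n + 1) (A j)) (Set.Ioc j (n + 1)) := by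
    have hAj : Set.InjOn A (Set.Ioc j n) := hp.injOn_edge.mono fun k hk => by simp at hk ⊢; omega
    refine (hAj.update (by simp) ?_).mono fun k hk => ?_
    · rintro ⟨i, hi, hij⟩
      have := hp.injOn_edge (by simp at hi ⊢; omega) (by simp; omega) hij
      simp at hi; omega
    · simp at hk ⊢; omega
  refine hcf <| hw.hasSimpleCycle (j := j) (by omega) (hx.mono fun k hk => by simp at hk ⊢; omega)
    hA ?_
  rw [update_self, update_of_ne (by omega)]
  exact hp.mem_left j hjn

theorem exists_isEdgePath [DecidableEq V] (hcf : ¬HasSimpleCycle E) {A₀ : Finset V}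
    (hA₀ : A₀ ∈ E) (hbranch : ∀ A ∈ E, 2 ≤ (A ∩ (E.erase A).sup id).card) (n : ℕ) :
    ∃ (A : ℕ → Finset V) (x : ℕ → V), IsEdgePath E n A x := by
  induction n with
  | zero =>
    obtain ⟨v, -⟩ := card_pos.mp (by linarith [hbranch A₀ hA₀])
    refine ⟨fun _ => A₀, fun _ => v, ⟨fun _ _ => hA₀, by simp, by simp⟩, ?_, by simp⟩
    exact fun i hi j hj _ => by simp at hi hj; omega
  | succ n ih =>
    obtain ⟨A, x, hp⟩ := ih
    obtain ⟨y, hyS, hy⟩ := exists_mem_ne (hbranch (A n) (hp.mem n le_rfl)) (x (n - 1))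
    obtain ⟨hyA, hyU⟩ := mem_inter.mp hyS
    obtain ⟨B, hBrest, hyB⟩ := mem_sup.mp hyU
    obtain ⟨hBA, hB⟩ := mem_erase.mp hBrest
    exact ⟨_, _, hp.snoc hcf hB hBA hyA hyB hy⟩

end Hypergraph

theorem stmt_7_general {V : Type*} [DecidableEq V] (E : Finset (Finset V))
    (hne : ∀ A ∈ E, A.Nonempty) (hconn : PathConn V E) (hcf : ¬HasSimpleCycle E)
    (hE : 2 ≤ E.card) :
    ∃ A ∈ E, (A ∩ (E.erase A).sup id).card = 1 := by
  by_contra! hleaf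
  have hbranch : ∀ A ∈ E, 2 ≤ (A ∩ (E.erase A).sup id).card := fun A hA => by
    have := (inter_sup_erase_nonempty hne hconn hE hA).card_pos
    have := hleaf A hA
    omega
  obtain ⟨A₀, hA₀⟩ : E.Nonempty := card_pos.mp (by omega)
  obtain ⟨A, x, hp⟩ := exists_isEdgePath hcf hA₀ hbranch E.card
  exact lt_irrefl _ hp.card_lt

theorem stmt_7 {V : Type*} [Fintype V] [DecidableEq V] (E : Finset (Finset V))
    (hne : ∀ A ∈ E, A.Nonempty) (hconn : PathConn V E) (hcf : ¬HasSimpleCycle E)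
    (hE : 2 ≤ E.card) :
    ∃ A ∈ E, (A ∩ (E.erase A).sup id).card = 1 :=
  stmt_7_general E hne hconn hcf hE
end

section
/- Let M = (M_1, M_2, ..., M_T) be a message generated deterministically from random variables R_1,...,R_n via a blackboard communication protocol: at each round j there exists an index i*(j), a deterministic function of the prefix M^{j-1} = (M_1,...,M_{j-1}), such that M_j is a deterministic function of (R_{i*(j)}, M^{j-1}). Then the sum over i from 1 to n of H(M | R_i) is at most (n-1)·H(M). -/
/-- Probability that the random variable `X` (on finite outcome space `Ω`
with probability mass function `p`) takes the value `a`. -/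
noncomputable def pmass {Ω α : Type*} [Fintype Ω] [DecidableEq α]
    (p : Ω → ℝ) (X : Ω → α) (a : α) : ℝ :=
  ∑ ω, if X ω = a then p ω else 0

/-- Shannon entropy (in bits) of a finitely valued random variable. -/
noncomputable def ent {Ω α : Type*} [Fintype Ω] [Fintype α] [DecidableEq α]
    (p : Ω → ℝ) (X : Ω → α) : ℝ :=
  ∑ a, -(pmass p X a * Real.logb 2 (pmass p X a))

/-- Conditional Shannon entropy `H(X | Y) = H(X, Y) - H(Y)`. -/
noncomputable def condEnt {Ω α β : Type*} [Fintype Ω] [Fintype α] [Fintype β]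
    [DecidableEq α] [DecidableEq β] (p : Ω → ℝ) (X : Ω → α) (Y : Ω → β) : ℝ :=
  ent p (fun ω => (X ω, Y ω)) - ent p Y

/-- `p` is a probability mass function on `Ω`. -/
def IsProb {Ω : Type*} [Fintype Ω] (p : Ω → ℝ) : Prop :=
  (∀ ω, 0 ≤ p ω) ∧ ∑ ω, p ω = 1

/-!
By the chain rule, `H(M | R_i) = ∑_j H(M_j | R_i, M^{<j})` and `H(M) = ∑_j H(M_j | M^{<j})`, so it
suffices to show `∑_i H(M_j | R_i, M^{<j}) ≤ (n - 1) H(M_j | M^{<j})` for every round `j`.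
Conditionally on a history `m`, the term with `i = i*(m)` vanishes because `M_j` is then a function
of `R_{i*(m)}`, and each of the other `n - 1` terms is at most `H(M_j | M^{<j} = m)` because
conditioning does not increase entropy.

Conditioning on an event `{Z = z}` is modelled by restricting the weights `q` to it without
renormalising; entropy identities and inequalities make sense for arbitrary nonnegative weights,
and `condEnt q X (fun _ => ())` then plays the role of `H(X)`.
-/

open Finset Real

section

variable {Ω α β γ : Type*} [Fintype Ω]

section Pmass

variable [DecidableEq α] {q : Ω → ℝ}

lemma pmass_nonneg (hq : ∀ ω, 0 ≤ q ω) (X : Ω → α) (a : α) : 0 ≤ pmass q X a :=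
  sum_nonneg fun ω _ => by split_ifs <;> simp [hq ω]

lemma pmass_congr [DecidableEq β] {X : Ω → α} {Y : Ω → β} {a : α} {b : β}
    (h : ∀ ω, X ω = a ↔ Y ω = b) : pmass q X a = pmass q Y b :=
  sum_congr rfl fun ω _ => if_congr (h ω) rfl rfl

lemma pmass_congr_ae {X X' : Ω → α} (h : ∀ ω, q ω ≠ 0 → X ω = X' ω) (a : α) :
    pmass q X a = pmass q X' a := by
  refine sum_congr rfl fun ω _ => ?_
  rcases eq_or_ne (q ω) 0 with hω | hω
  · simp [hω]
  · rw [h ω hω]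

lemma sum_pmass [Fintype α] (X : Ω → α) : ∑ a, pmass q X a = ∑ ω, q ω := by
  unfold pmass
  rw [sum_comm]
  simp

lemma sum_pmass_pair_left [Fintype α] [DecidableEq β] (X : Ω → α) (Y : Ω → β) (b : β) :
    ∑ a, pmass q (fun ω => (X ω, Y ω)) (a, b) = pmass q Y b := by
  unfold pmass
  rw [sum_comm]
  refine sum_congr rfl fun ω _ => ?_
  by_cases h : Y ω = b <;> simp [h]

lemma sum_pmass_pair_right [DecidableEq β] [Fintype β] (X : Ω → α) (Y : Ω → β) (a : α) :
    ∑ b, pmass q (fun ω => (X ω, Y ω)) (a, b) = pmass q X a := by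
  unfold pmass
  rw [sum_comm]
  refine sum_congr rfl fun ω _ => ?_
  by_cases h : X ω = a <;> simp [h]

lemma pmass_pair_le_right [DecidableEq β] (hq : ∀ ω, 0 ≤ q ω) (X : Ω → α) (Y : Ω → β)
    (a : α) (b : β) : pmass q (fun ω => (X ω, Y ω)) (a, b) ≤ pmass q Y b :=
  sum_le_sum fun ω _ => by split_ifs <;> simp_all

lemma pmass_ne_zero_of_pmass_pair_ne_zero [DecidableEq β] (hq : ∀ ω, 0 ≤ q ω) {X : Ω → α}
    {Y : Ω → β} {a : α} {b : β} (h : pmass q (fun ω => (X ω, Y ω)) (a, b) ≠ 0) :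
    pmass q Y b ≠ 0 := fun hb =>
  h (le_antisymm (hb ▸ pmass_pair_le_right hq X Y a b) (pmass_nonneg hq _ _))

lemma pmass_indicator [DecidableEq γ] (X : Ω → α) (Z : Ω → γ) (a : α) (z : γ) :
    pmass ((Z ⁻¹' {z}).indicator q) X a = pmass q (fun ω => (X ω, Z ω)) (a, z) := by
  unfold pmass
  refine sum_congr rfl fun ω _ => ?_
  by_cases h : Z ω = z <;> simp [h]

end Pmass

lemma mul_log_div_le {a x A B : ℝ} (ha : 0 ≤ a) (hx : 0 ≤ x) (hax : a ≠ 0 → x ≠ 0)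
    (hA : 0 < A) (hB : 0 < B) : a * log (x / a) ≤ a * log (B / A) + A / B * x - a := by
  rcases ha.eq_or_lt with rfl | ha
  · simp only [zero_mul, zero_add, sub_zero]
    positivity
  have hx : 0 < x := hx.lt_of_ne (hax ha.ne').symm
  calc a * log (x / a) = a * log (B / A) + a * log (x / a / (B / A)) := by
        rw [← mul_add, ← log_mul (by positivity) (by positivity), mul_div_cancel₀ _ (by positivity)]
    _ ≤ a * log (B / A) + a * (x / a / (B / A) - 1) := by
        gcongr
        exact log_le_sub_one_of_pos (by positivity)
    _ = a * log (B / A) + A / B * x - a := by field_simp; ring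

theorem sum_mul_log_div_le {ι : Type*} (s : Finset ι) {a b : ι → ℝ}
    (ha : ∀ i ∈ s, 0 ≤ a i) (hb : ∀ i ∈ s, 0 ≤ b i) (hab : ∀ i ∈ s, a i ≠ 0 → b i ≠ 0) :
    ∑ i ∈ s, a i * log (b i / a i) ≤ (∑ i ∈ s, a i) * log ((∑ i ∈ s, b i) / ∑ i ∈ s, a i) := by
  rcases (sum_nonneg ha).eq_or_lt with hA | hA
  · have ha0 : ∀ i ∈ s, a i = 0 := (sum_eq_zero_iff_of_nonneg ha).1 hA.symm
    rw [← hA, zero_mul]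
    exact (sum_eq_zero fun i hi => by rw [ha0 i hi, zero_mul]).le
  obtain ⟨i, hi, hai⟩ := exists_ne_zero_of_sum_ne_zero hA.ne'
  set A := ∑ i ∈ s, a i
  set B := ∑ i ∈ s, b i
  have hB : 0 < B :=
    ((hb i hi).lt_of_ne (hab i hi hai).symm).trans_le (single_le_sum hb hi)
  calc ∑ i ∈ s, a i * log (b i / a i)
      ≤ ∑ i ∈ s, (a i * log (B / A) + A / B * b i - a i) :=
        sum_le_sum fun i hi => mul_log_div_le (ha i hi) (hb i hi) (hab i hi) hA hB
    _ = A * log (B / A) := by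
        rw [sum_sub_distrib, sum_add_distrib, ← sum_mul, ← mul_sum]
        field_simp
        ring

theorem sum_mul_logb_div_le {ι : Type*} (s : Finset ι) {a b : ι → ℝ} {c : ℝ} (hc : 1 < c)
    (ha : ∀ i ∈ s, 0 ≤ a i) (hb : ∀ i ∈ s, 0 ≤ b i) (hab : ∀ i ∈ s, a i ≠ 0 → b i ≠ 0) :
    ∑ i ∈ s, a i * logb c (b i / a i) ≤
      (∑ i ∈ s, a i) * logb c ((∑ i ∈ s, b i) / ∑ i ∈ s, a i) := by
  simp only [logb, ← mul_div_assoc, ← sum_div]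
  exact div_le_div_of_nonneg_right (sum_mul_log_div_le s ha hb hab) (log_pos hc).le

section Entropy

variable [Fintype α] [DecidableEq α] [Fintype β] [DecidableEq β] [Fintype γ] [DecidableEq γ]
  {q : Ω → ℝ}

lemma ent_comp_injective (q : Ω → ℝ) {g : α → β} (hg : g.Injective) (X : Ω → α) :
    ent q (fun ω => g (X ω)) = ent q X := by
  refine (Fintype.sum_of_injective g hg _ _ (fun b hb => ?_) fun a => ?_).symm
  · have : pmass q (fun ω => g (X ω)) b = 0 :=
      sum_eq_zero fun ω _ => if_neg fun h => hb ⟨X ω, h⟩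
    simp [this]
  · rw [pmass_congr fun ω => hg.eq_iff.symm]

lemma ent_congr_ae {X X' : Ω → α} (h : ∀ ω, q ω ≠ 0 → X ω = X' ω) : ent q X = ent q X' := by
  simp only [ent, pmass_congr_ae h]

lemma ent_const (hq : ∑ ω, q ω = 1) (c : α) : ent q (fun _ => c) = 0 := by
  refine sum_eq_zero fun a _ => ?_
  by_cases h : c = a <;> simp [pmass, h, hq]

lemma condEnt_comp_injective (q : Ω → ℝ) (X : Ω → α) {g : β → γ} (hg : g.Injective)
    (Y : Ω → β) : condEnt q X (fun ω => g (Y ω)) = condEnt q X Y :=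
  congrArg₂ (· - ·)
    (ent_comp_injective q (Function.injective_id.prodMap hg) (fun ω => (X ω, Y ω)))
    (ent_comp_injective q hg Y)

lemma condEnt_eq_zero_of_ae_eq_comp {X : Ω → α} {Y : Ω → β} (g : β → α)
    (h : ∀ ω, q ω ≠ 0 → X ω = g (Y ω)) : condEnt q X Y = 0 := by
  have hg : (fun b => (g b, b)).Injective := fun b b' h => congrArg Prod.snd h
  rw [condEnt, ent_congr_ae (X' := fun ω => (g (Y ω), Y ω)) fun ω hω => by rw [h ω hω],
    ent_comp_injective q hg Y, sub_self]

lemma ent_prod_eq_sum_ent_indicator (q : Ω → ℝ) (X : Ω → α) (Z : Ω → γ) :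
    ent q (fun ω => (X ω, Z ω)) = ∑ z, ent ((Z ⁻¹' {z}).indicator q) X := by
  rw [ent, Fintype.sum_prod_type, sum_comm]
  simp only [ent, pmass_indicator]

lemma condEnt_prod_eq_sum_condEnt_indicator (q : Ω → ℝ) (X : Ω → α) (Y : Ω → β)
    (Z : Ω → γ) :
    condEnt q X (fun ω => (Y ω, Z ω)) = ∑ z, condEnt ((Z ⁻¹' {z}).indicator q) X Y := by
  simp only [condEnt, sum_sub_distrib, ← ent_prod_eq_sum_ent_indicator]
  congr 1
  exact ent_comp_injective q (Equiv.prodAssoc α β γ).injective fun ω => ((X ω, Y ω), Z ω)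

lemma condEnt_eq_sum (hq : ∀ ω, 0 ≤ q ω) (X : Ω → α) (Y : Ω → β) :
    condEnt q X Y = ∑ a, ∑ b, pmass q (fun ω => (X ω, Y ω)) (a, b) *
      logb 2 (pmass q Y b / pmass q (fun ω => (X ω, Y ω)) (a, b)) := by
  have hentY : ent q Y =
      ∑ a, ∑ b, -(pmass q (fun ω => (X ω, Y ω)) (a, b) * logb 2 (pmass q Y b)) := by
    rw [sum_comm]
    refine sum_congr rfl fun b _ => ?_
    rw [sum_neg_distrib, ← sum_mul, sum_pmass_pair_left]
  rw [condEnt, hentY, ent, Fintype.sum_prod_type, ← sum_sub_distrib]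
  refine sum_congr rfl fun a _ => ?_
  rw [← sum_sub_distrib]
  refine sum_congr rfl fun b _ => ?_
  rcases eq_or_ne (pmass q (fun ω => (X ω, Y ω)) (a, b)) 0 with h | h
  · simp [h]
  · rw [logb_div (pmass_ne_zero_of_pmass_pair_ne_zero hq h) h]
    ring

lemma condEnt_le_condEnt_unit (hq : ∀ ω, 0 ≤ q ω) (X : Ω → α) (Y : Ω → β) :
    condEnt q X Y ≤ condEnt q X (fun _ => ()) := by
  rw [condEnt_eq_sum hq, condEnt_eq_sum hq]
  refine sum_le_sum fun a _ => ?_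
  have hXa : pmass q (fun ω => (X ω, ())) (a, ()) = pmass q X a := pmass_congr (by simp)
  have hS : pmass q (fun _ => ()) () = ∑ ω, q ω := by simp [pmass]
  simp only [Fintype.sum_unique, hXa, hS]
  calc _ ≤ (∑ b, pmass q (fun ω => (X ω, Y ω)) (a, b)) *
        logb 2 ((∑ b, pmass q Y b) / ∑ b, pmass q (fun ω => (X ω, Y ω)) (a, b)) :=
        sum_mul_logb_div_le _ one_lt_two (fun b _ => pmass_nonneg hq _ _)
          (fun b _ => pmass_nonneg hq _ _) fun b _ => pmass_ne_zero_of_pmass_pair_ne_zero hq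
    _ = _ := by rw [sum_pmass_pair_right, sum_pmass]

end Entropy

section ChainRule

variable [Fintype α] [DecidableEq α] [Fintype β] [DecidableEq β]

theorem ent_prod_pi_eq_add_sum_condEnt (q : Ω → ℝ) (Y : Ω → β) {k : ℕ} (M : Fin k → Ω → α) :
    ent q (fun ω => (Y ω, fun j => M j ω)) = ent q Y + ∑ j, condEnt q (M j)
      (fun ω => (Y ω, fun l : Fin j.val => M ⟨l.val, l.isLt.trans j.isLt⟩ ω)) := by
  induction k with
  | zero =>
    have hg : (fun y : β => (y, (Fin.elim0 : Fin 0 → α))).Injective :=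
      fun _ _ h => congrArg Prod.fst h
    rw [Fin.sum_univ_zero, add_zero, ← ent_comp_injective q hg Y]
    exact congrArg (ent q) (funext fun ω => Prod.ext rfl (Subsingleton.elim _ _))
  | succ k ih =>
    have hg : (fun yv : β × (Fin (k + 1) → α) =>
        (yv.2 (Fin.last k), (yv.1, Fin.init yv.2))).Injective := by
      rintro ⟨y, v⟩ ⟨y', v'⟩ h
      simp only [Prod.mk.injEq] at h
      obtain ⟨hl, rfl, hi⟩ := h
      rw [← Fin.snoc_init_self v, ← Fin.snoc_init_self v', hl, hi]
    rw [← ent_comp_injective q hg, Fin.sum_univ_castSucc, ← add_assoc]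
    exact (add_sub_cancel _ _).symm.trans (congrArg₂ (· + ·) (ih fun j => M j.castSucc) rfl)

theorem condEnt_pi_eq_sum_condEnt (q : Ω → ℝ) (Y : Ω → β) {k : ℕ} (M : Fin k → Ω → α) :
    condEnt q (fun ω j => M j ω) Y = ∑ j, condEnt q (M j)
      (fun ω => (Y ω, fun l : Fin j.val => M ⟨l.val, l.isLt.trans j.isLt⟩ ω)) := by
  calc condEnt q (fun ω j => M j ω) Y = ent q (fun ω => (Y ω, fun j => M j ω)) - ent q Y :=
        congrArg (· - ent q Y)
          (ent_comp_injective q Prod.swap_injective fun ω => (Y ω, fun j => M j ω))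
    _ = _ := by rw [ent_prod_pi_eq_add_sum_condEnt, add_sub_cancel_left]

theorem ent_pi_eq_sum_condEnt {q : Ω → ℝ} (hq : ∑ ω, q ω = 1) {k : ℕ} (M : Fin k → Ω → α) :
    ent q (fun ω j => M j ω) =
      ∑ j, condEnt q (M j) (fun ω (l : Fin j.val) => M ⟨l.val, l.isLt.trans j.isLt⟩ ω) := by
  have hg : ∀ m, (fun v : Fin m → α => ((), v)).Injective :=
    fun _ _ _ h => congrArg Prod.snd h
  rw [← ent_comp_injective q (hg k), ent_prod_pi_eq_add_sum_condEnt q (fun _ => ()),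
    ent_const hq, zero_add]
  exact sum_congr rfl fun j _ => condEnt_comp_injective q (M j) (hg j) _

end ChainRule

section Protocol

variable [Fintype α] [DecidableEq α] [Fintype β] [DecidableEq β] [Fintype γ] [DecidableEq γ]
  {ι : Type*} [Fintype ι] {q : Ω → ℝ}

theorem sum_condEnt_le_card_sub_one_mul (hq : ∀ ω, 0 ≤ q ω) (X : Ω → α) (R : ι → Ω → β)
    {i₀ : ι} (h₀ : condEnt q X (R i₀) = 0) :
    ∑ i, condEnt q X (R i) ≤ (Fintype.card ι - 1 : ℝ) * condEnt q X (fun _ => ()) := by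
  classical
  rw [← add_sum_erase _ _ (mem_univ i₀), h₀, zero_add]
  calc ∑ i ∈ univ.erase i₀, condEnt q X (R i)
      ≤ ∑ _i ∈ univ.erase i₀, condEnt q X (fun _ => ()) :=
        sum_le_sum fun i _ => condEnt_le_condEnt_unit hq X (R i)
    _ = _ := by
        rw [sum_const, card_erase_of_mem (mem_univ _), card_univ, nsmul_eq_mul,
          Nat.cast_pred (Fintype.card_pos_iff.2 ⟨i₀⟩)]

theorem sum_condEnt_prod_le_card_sub_one_mul (hq : ∀ ω, 0 ≤ q ω) (X : Ω → α)
    (R : ι → Ω → β) (Z : Ω → γ) (i₀ : γ → ι) (f : γ → β → α)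
    (hX : ∀ ω, q ω ≠ 0 → X ω = f (Z ω) (R (i₀ (Z ω)) ω)) :
    ∑ i, condEnt q X (fun ω => (R i ω, Z ω)) ≤
      (Fintype.card ι - 1 : ℝ) * condEnt q X Z := by
  have hZ : condEnt q X Z = ∑ z, condEnt ((Z ⁻¹' {z}).indicator q) X (fun _ => ()) := by
    rw [← condEnt_comp_injective q X (g := fun z => ((), z)) (fun _ _ h => congrArg Prod.snd h),
      condEnt_prod_eq_sum_condEnt_indicator]
  simp only [condEnt_prod_eq_sum_condEnt_indicator, hZ, mul_sum]
  rw [sum_comm]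
  refine sum_le_sum fun z _ => sum_condEnt_le_card_sub_one_mul
    (fun ω => Set.indicator_nonneg (fun ω _ => hq ω) ω) X R (i₀ := i₀ z)
    (condEnt_eq_zero_of_ae_eq_comp (f z) fun ω hω => ?_)
  obtain ⟨hZω, hqω⟩ : Z ω = z ∧ q ω ≠ 0 := by
    simpa [Set.indicator_apply] using hω
  rw [hX ω hqω, hZω]

end Protocol

end

theorem stmt_8 {Ω ρ μ : Type*} [Fintype Ω] [Fintype ρ] [Fintype μ]
    [DecidableEq ρ] [DecidableEq μ]
    (p : Ω → ℝ) (hp : IsProb p) (n T : ℕ)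
    (R : Fin n → Ω → ρ) (M : Fin T → Ω → μ)
    (hproto : ∀ j : Fin T, ∃ (istar : (Fin j.val → μ) → Fin n)
        (f : (Fin j.val → μ) → ρ → μ),
      ∀ ω, p ω ≠ 0 →
        M j ω = f (fun l => M ⟨l.val, l.isLt.trans j.isLt⟩ ω)
                  (R (istar (fun l => M ⟨l.val, l.isLt.trans j.isLt⟩ ω)) ω)) :
    ∑ i, condEnt p (fun ω => (fun j => M j ω)) (R i) ≤
      ((n : ℝ) - 1) * ent p (fun ω => (fun j => M j ω)) := by
  obtain ⟨hp₀, hp₁⟩ := hp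
  calc ∑ i, condEnt p (fun ω j => M j ω) (R i)
      = ∑ i, ∑ j, condEnt p (M j)
          (fun ω => (R i ω, fun l : Fin j.val => M ⟨l.val, l.isLt.trans j.isLt⟩ ω)) :=
        sum_congr rfl fun i _ => condEnt_pi_eq_sum_condEnt p (R i) M
    _ = ∑ j, ∑ i, condEnt p (M j)
          (fun ω => (R i ω, fun l : Fin j.val => M ⟨l.val, l.isLt.trans j.isLt⟩ ω)) := sum_comm
    _ ≤ ∑ j, ((n : ℝ) - 1) *
          condEnt p (M j) (fun ω (l : Fin j.val) => M ⟨l.val, l.isLt.trans j.isLt⟩ ω) :=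
        sum_le_sum fun j _ => by
          obtain ⟨istar, f, hf⟩ := hproto j
          simpa using sum_condEnt_prod_le_card_sub_one_mul hp₀ (M j) R _ istar f hf
    _ = ((n : ℝ) - 1) * ent p (fun ω j => M j ω) := by
        rw [← mul_sum, ent_pi_eq_sum_condEnt hp₁]
end
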